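/- There exists an absolute constant c > 0 such that for every integer E ≥ 1, every toral eigenfunction f with frequency E and every z ∈ ℝ², there is a point x ∈ B(z, c/√E) with f(x) = 0. -/

import Mathlib

open MeasureTheory Metric

noncomputable section

/-- The set of lattice points on the circle of radius `√E`. -/
def latticeE (E : ℕ) : Finset (ℤ × ℤ) :=
  ((Finset.Icc (-(E : ℤ)) (E : ℤ)) ×ˢ (Finset.Icc (-(E : ℤ)) (E : ℤ))).filter
    (fun ξ => ξ.1 ^ 2 + ξ.2 ^ 2 = (E : ℤ))

/-- A toral eigenfunction with frequency `E`: a real-valued trigonometric polynomial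
`f(x) = ∑_{‖ξ‖² = E} a_ξ e^{2πi⟨ξ,x⟩}` with `a_{-ξ} = conj (a_ξ)` and not all
coefficients zero. -/
def IsToralEigenfunction (E : ℕ) (f : EuclideanSpace ℝ (Fin 2) → ℝ) : Prop :=
  ∃ a : ℤ × ℤ → ℂ,
    (∀ ξ : ℤ × ℤ, a (-ξ) = starRingEnd ℂ (a ξ)) ∧
    (∃ ξ ∈ latticeE E, a ξ ≠ 0) ∧
    ∀ x : EuclideanSpace ℝ (Fin 2),
      (f x : ℂ) = ∑ ξ ∈ latticeE E,
        a ξ * Complex.exp (2 * Real.pi * Complex.I *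
          ((ξ.1 : ℂ) * (x 0 : ℂ) + (ξ.2 : ℂ) * (x 1 : ℂ)))

/-
A plane wave `e^{2πi⟨ξ,x⟩}` with `‖ξ‖ = √E`, averaged over the circle of radius `r` about `z`,
gives `e^{2πi⟨ξ,z⟩}` times `∫₀^{2π} e^{i·2πr√E·cos θ} dθ` (rotate `θ` by the argument of `ξ`).
Hence every toral eigenfunction satisfies the mean value identity
`∫₀^{2π} f(z + r(cos θ, sin θ)) dθ = 2π J₀(2πr√E) f(z)`. Taking `2πr√E = 3`, where `J₀(3) < 0`
(an eighth-order Taylor bound for `cos` and the Wallis integrals suffice), `f` takes a value of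
sign opposite to `f(z)` on the circle of radius `r = 3/(2π√E) < 1/√E`, and the intermediate value
theorem on the disc gives a zero.
-/

open Real

theorem le_of_hasDerivAt_le {f g f' g' : ℝ → ℝ} {x : ℝ} (hx : 0 ≤ x)
    (hf : ∀ x, HasDerivAt f (f' x) x) (hg : ∀ x, HasDerivAt g (g' x) x) (h₀ : f 0 ≤ g 0)
    (h' : ∀ x, 0 ≤ x → f' x ≤ g' x) : f x ≤ g x := by
  have hmono : MonotoneOn (g - f) (Set.Ici 0) := by
    refine monotoneOn_of_hasDerivWithinAt_nonneg (f' := g' - f') (convex_Ici 0)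
      (fun y _ => ((hg y).sub (hf y)).continuousAt.continuousWithinAt)
      (fun y _ => ((hg y).sub (hf y)).hasDerivWithinAt) fun y hy => ?_
    rw [interior_Ici] at hy
    exact sub_nonneg.2 (h' y (le_of_lt hy))
  have := hmono Set.self_mem_Ici hx hx
  simp only [Pi.sub_apply] at this
  linarith

namespace Real

theorem cos_le_taylor_four {x : ℝ} (hx : 0 ≤ x) : cos x ≤ 1 - x ^ 2 / 2 + x ^ 4 / 24 := by
  have hp (x : ℝ) : HasDerivAt (fun x => 1 - x ^ 2 / 2 + x ^ 4 / 24) (-x + x ^ 3 / 6) x := by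
    refine ((((hasDerivAt_pow 2 x).div_const 2).const_sub 1).add
      ((hasDerivAt_pow 4 x).div_const 24)).congr_deriv ?_
    norm_num; ring
  exact le_of_hasDerivAt_le hx hasDerivAt_cos hp (by simp)
    fun y hy => by linarith [sin_ge_sub_cube hy]

theorem sin_le_taylor_five {x : ℝ} (hx : 0 ≤ x) : sin x ≤ x - x ^ 3 / 6 + x ^ 5 / 120 := by
  have hp (x : ℝ) : HasDerivAt (fun x => x - x ^ 3 / 6 + x ^ 5 / 120)
      (1 - x ^ 2 / 2 + x ^ 4 / 24) x := by
    refine (((hasDerivAt_id x).sub ((hasDerivAt_pow 3 x).div_const 6)).add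
      ((hasDerivAt_pow 5 x).div_const 120)).congr_deriv ?_
    norm_num; ring
  exact le_of_hasDerivAt_le hx hasDerivAt_sin hp (by simp) fun _ hy => cos_le_taylor_four hy

theorem taylor_six_le_cos {x : ℝ} (hx : 0 ≤ x) :
    1 - x ^ 2 / 2 + x ^ 4 / 24 - x ^ 6 / 720 ≤ cos x := by
  have hp (x : ℝ) : HasDerivAt (fun x => 1 - x ^ 2 / 2 + x ^ 4 / 24 - x ^ 6 / 720)
      (-x + x ^ 3 / 6 - x ^ 5 / 120) x := by
    refine (((((hasDerivAt_pow 2 x).div_const 2).const_sub 1).add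
      ((hasDerivAt_pow 4 x).div_const 24)).sub
      ((hasDerivAt_pow 6 x).div_const 720)).congr_deriv ?_
    norm_num; ring
  exact le_of_hasDerivAt_le hx hp hasDerivAt_cos (by simp)
    fun y hy => by linarith [sin_le_taylor_five hy]

theorem taylor_seven_le_sin {x : ℝ} (hx : 0 ≤ x) :
    x - x ^ 3 / 6 + x ^ 5 / 120 - x ^ 7 / 5040 ≤ sin x := by
  have hp (x : ℝ) : HasDerivAt (fun x => x - x ^ 3 / 6 + x ^ 5 / 120 - x ^ 7 / 5040)
      (1 - x ^ 2 / 2 + x ^ 4 / 24 - x ^ 6 / 720) x := by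
    refine ((((hasDerivAt_id x).sub ((hasDerivAt_pow 3 x).div_const 6)).add
      ((hasDerivAt_pow 5 x).div_const 120)).sub
      ((hasDerivAt_pow 7 x).div_const 5040)).congr_deriv ?_
    norm_num; ring
  exact le_of_hasDerivAt_le hx hp hasDerivAt_sin (by simp) fun _ hy => taylor_six_le_cos hy

theorem cos_le_taylor_eight_of_nonneg {x : ℝ} (hx : 0 ≤ x) :
    cos x ≤ 1 - x ^ 2 / 2 + x ^ 4 / 24 - x ^ 6 / 720 + x ^ 8 / 40320 := by
  have hp (x : ℝ) : HasDerivAt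
      (fun x => 1 - x ^ 2 / 2 + x ^ 4 / 24 - x ^ 6 / 720 + x ^ 8 / 40320)
      (-x + x ^ 3 / 6 - x ^ 5 / 120 + x ^ 7 / 5040) x := by
    refine ((((((hasDerivAt_pow 2 x).div_const 2).const_sub 1).add
      ((hasDerivAt_pow 4 x).div_const 24)).sub ((hasDerivAt_pow 6 x).div_const 720)).add
      ((hasDerivAt_pow 8 x).div_const 40320)).congr_deriv ?_
    norm_num; ring
  exact le_of_hasDerivAt_le hx hasDerivAt_cos hp (by simp)
    fun y hy => by linarith [taylor_seven_le_sin hy]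

theorem cos_le_taylor_eight (x : ℝ) :
    cos x ≤ 1 - x ^ 2 / 2 + x ^ 4 / 24 - x ^ 6 / 720 + x ^ 8 / 40320 := by
  rcases le_total 0 x with hx | hx
  · exact cos_le_taylor_eight_of_nonneg hx
  · simpa [Even.neg_pow, Nat.even_iff] using cos_le_taylor_eight_of_nonneg (neg_nonneg.2 hx)

end Real

theorem integral_cos_pow_add_two_zero_two_pi (n : ℕ) :
    ∫ θ in (0 : ℝ)..2 * π, cos θ ^ (n + 2) =
      (n + 1) / (n + 2) * ∫ θ in (0 : ℝ)..2 * π, cos θ ^ n := by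
  simp [integral_cos_pow]

theorem integral_cos_three_mul_cos_neg : ∫ θ in (0 : ℝ)..2 * π, cos (3 * cos θ) < 0 := by
  calc ∫ θ in (0 : ℝ)..2 * π, cos (3 * cos θ)
      ≤ ∫ θ in (0 : ℝ)..2 * π, (1 - 9 / 2 * cos θ ^ 2 + 27 / 8 * cos θ ^ 4
          - 81 / 80 * cos θ ^ 6 + 729 / 4480 * cos θ ^ 8) := by
        refine intervalIntegral.integral_mono_on (by positivity)
          ((by fun_prop : Continuous _).intervalIntegrable _ _)
          ((by fun_prop : Continuous _).intervalIntegrable _ _) fun θ _ => ?_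
        convert cos_le_taylor_eight (3 * cos θ) using 1
        ring
    _ = -(4199 / 8192) * π := by
        rw [intervalIntegral.integral_add, intervalIntegral.integral_sub,
          intervalIntegral.integral_add, intervalIntegral.integral_sub]
        · simp only [intervalIntegral.integral_const_mul, integral_cos_pow_add_two_zero_two_pi]
          norm_num
          ring
        all_goals exact (by fun_prop : Continuous _).intervalIntegrable _ _
    _ < 0 := by linarith [pi_pos]

theorem Function.Periodic.intervalIntegral_comp_sub_eq {E : Type*} [NormedAddCommGroup E]
    [NormedSpace ℝ E] {f : ℝ → E} {T : ℝ} (hf : Function.Periodic f T) (t φ : ℝ) :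
    ∫ x in t..t + T, f (x - φ) = ∫ x in t..t + T, f x := by
  rw [intervalIntegral.integral_comp_sub_right, show t + T - φ = t - φ + T by ring,
    hf.intervalIntegral_add_eq]

section

open Complex

theorem integral_exp_circle (m k w₁ w₂ r : ℝ) :
    ∫ θ in (0 : ℝ)..2 * π,
        cexp (2 * π * I * (m * (w₁ + r * Real.cos θ : ℝ) + k * (w₂ + r * Real.sin θ : ℝ))) =
      cexp (2 * π * I * (m * w₁ + k * w₂)) *
        ∫ θ in (0 : ℝ)..2 * π, cexp ((2 * π * r * √(m ^ 2 + k ^ 2) * Real.cos θ : ℝ) * I) := by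
  set ρ := √(m ^ 2 + k ^ 2)
  set φ := arg (m + k * I)
  have hnorm : ‖(m + k * I : ℂ)‖ = ρ := norm_add_mul_I m k
  have hm : (ρ * Real.cos φ : ℂ) = m := by
    rw [← hnorm]; exact_mod_cast (norm_mul_cos_arg _).trans (by simp)
  have hk : (ρ * Real.sin φ : ℂ) = k := by
    rw [← hnorm]; exact_mod_cast (norm_mul_sin_arg _).trans (by simp)
  have hexp (θ : ℝ) :
      cexp (2 * π * I * (m * (w₁ + r * Real.cos θ : ℝ) + k * (w₂ + r * Real.sin θ : ℝ))) =
        cexp (2 * π * I * (m * w₁ + k * w₂)) *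
          cexp ((2 * π * r * ρ * Real.cos (θ - φ) : ℝ) * I) := by
    rw [← Complex.exp_add, Real.cos_sub]
    congr 1
    push_cast at hm hk ⊢
    linear_combination (-2 * π * I * r * Complex.cos θ) * hm
      + (-2 * π * I * r * Complex.sin θ) * hk
  have hper : Function.Periodic
      (fun θ => cexp ((2 * π * r * ρ * Real.cos θ : ℝ) * I)) (2 * π) :=
    fun θ => by simp [Real.cos_add_two_pi]
  simp_rw [hexp, intervalIntegral.integral_const_mul]
  simpa using congrArg (cexp (2 * π * I * (m * w₁ + k * w₂)) * ·)
    (hper.intervalIntegral_comp_sub_eq 0 φ)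

namespace IsToralEigenfunction

variable {E : ℕ} {f : EuclideanSpace ℝ (Fin 2) → ℝ}

theorem continuous (hf : IsToralEigenfunction E f) : Continuous f := by
  obtain ⟨a, -, -, hrep⟩ := hf
  have : f = fun x => (∑ ξ ∈ latticeE E, a ξ * cexp (2 * π * I *
      ((ξ.1 : ℂ) * (x 0 : ℂ) + (ξ.2 : ℂ) * (x 1 : ℂ)))).re := by
    ext x; rw [← hrep, ofReal_re]
  rw [this]
  fun_prop

theorem integral_circle (hf : IsToralEigenfunction E f) (z : EuclideanSpace ℝ (Fin 2)) (r : ℝ) :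
    ∫ θ in (0 : ℝ)..2 * π, f (z + r • !₂[Real.cos θ, Real.sin θ]) =
      f z * ∫ θ in (0 : ℝ)..2 * π, Real.cos (2 * π * r * √E * Real.cos θ) := by
  obtain ⟨a, -, -, hrep⟩ := hf
  set C := ∫ θ in (0 : ℝ)..2 * π, cexp ((2 * π * r * √E * Real.cos θ : ℝ) * I)
  have hterm (ξ : ℤ × ℤ) (hξ : ξ ∈ latticeE E) :
      ∫ θ in (0 : ℝ)..2 * π, cexp (2 * π * I * ((ξ.1 : ℂ) * ((z 0 + r * Real.cos θ : ℝ) : ℂ)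
        + (ξ.2 : ℂ) * ((z 1 + r * Real.sin θ : ℝ) : ℂ))) =
        cexp (2 * π * I * ((ξ.1 : ℂ) * (z 0 : ℂ) + (ξ.2 : ℂ) * (z 1 : ℂ))) * C := by
    have hE : (ξ.1 : ℝ) ^ 2 + (ξ.2 : ℝ) ^ 2 = E := by
      exact_mod_cast (Finset.mem_filter.1 hξ).2
    have h := integral_exp_circle ξ.1 ξ.2 (z 0) (z 1) r
    rw [hE] at h
    simpa only [ofReal_intCast] using h
  have hcomplex : ((∫ θ in (0 : ℝ)..2 * π, f (z + r • !₂[Real.cos θ, Real.sin θ]) : ℝ) : ℂ) =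
      f z * C := by
    have hpt (θ : ℝ) : (f (z + r • !₂[Real.cos θ, Real.sin θ]) : ℂ) =
        ∑ ξ ∈ latticeE E, a ξ * cexp (2 * π * I * ((ξ.1 : ℂ) * ((z 0 + r * Real.cos θ : ℝ) : ℂ)
          + (ξ.2 : ℂ) * ((z 1 + r * Real.sin θ : ℝ) : ℂ))) := by
      simp only [hrep, PiLp.add_apply, PiLp.smul_apply, Matrix.cons_val_zero, smul_eq_mul,
        Matrix.cons_val_one, Matrix.cons_val_fin_one]
    rw [← intervalIntegral.integral_ofReal]
    simp_rw [hpt]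
    rw [intervalIntegral.integral_finsetSum
        fun ξ _ => (by fun_prop : Continuous _).intervalIntegrable _ _, hrep z, Finset.sum_mul]
    refine Finset.sum_congr rfl fun ξ hξ => ?_
    rw [intervalIntegral.integral_const_mul, hterm ξ hξ, ← mul_assoc]
  have hC : C.re = ∫ θ in (0 : ℝ)..2 * π, Real.cos (2 * π * r * √E * Real.cos θ) := by
    have h := intervalIntegral.intervalIntegral_re (μ := MeasureTheory.volume) (a := 0)
      (b := 2 * π) ((by fun_prop : Continuous fun θ : ℝ =>
        cexp ((2 * π * r * √E * Real.cos θ : ℝ) * I)).intervalIntegrable _ _)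
    simp only [RCLike.re_to_complex, exp_ofReal_mul_I_re] at h
    exact h.symm
  rw [← hC, ← re_ofReal_mul, ← hcomplex, ofReal_re]

end IsToralEigenfunction

end

theorem exists_mul_nonpos_of_intervalIntegral_eq_mul {g : ℝ → ℝ} {a b c K : ℝ} (hab : a ≤ b)
    (hg : ∫ x in a..b, g x = c * K) (hK : K < 0) : ∃ x, c * g x ≤ 0 := by
  by_contra! h
  have hint : 0 ≤ ∫ x in a..b, c * g x :=
    intervalIntegral.integral_nonneg hab fun x _ => (h x).le
  rw [intervalIntegral.integral_const_mul, hg] at hint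
  have hc : c ≠ 0 := fun hc => by simpa [hc] using h 0
  nlinarith [sq_pos_of_ne_zero hc]

theorem IsPreconnected.exists_eq_zero_of_mul_nonpos {X : Type*} [TopologicalSpace X] {s : Set X}
    (hs : IsPreconnected s) {f : X → ℝ} (hf : ContinuousOn f s) {a b : X} (ha : a ∈ s)
    (hb : b ∈ s) (hab : f a * f b ≤ 0) : ∃ x ∈ s, f x = 0 := by
  rcases mul_nonpos_iff.1 hab with ⟨h₁, h₂⟩ | ⟨h₁, h₂⟩
  · exact hs.intermediate_value hb ha hf ⟨h₂, h₁⟩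
  · exact hs.intermediate_value ha hb hf ⟨h₁, h₂⟩

theorem norm_smul_cos_sin (r θ : ℝ) : ‖r • !₂[cos θ, sin θ]‖ = |r| := by
  simp [norm_smul, EuclideanSpace.norm_eq, Fin.sum_univ_two]

/-- Density of the nodal set: there is an absolute constant `c > 0` such that every toral
eigenfunction of frequency `E ≥ 1` vanishes somewhere in every ball of radius `c/√E`. -/
theorem nodal_set_density :
    ∃ c : ℝ, 0 < c ∧
      ∀ E : ℕ, 1 ≤ E →
        ∀ f : EuclideanSpace ℝ (Fin 2) → ℝ, IsToralEigenfunction E f →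
          ∀ z : EuclideanSpace ℝ (Fin 2),
            ∃ x ∈ ball z (c / Real.sqrt E), f x = 0 := by
  refine ⟨1, one_pos, fun E hE f hf z => ?_⟩
  have hsqrtE : 0 < √(E : ℝ) := Real.sqrt_pos.2 (by exact_mod_cast hE)
  set r := 3 / (2 * π * √(E : ℝ))
  have hr : 0 < r := by positivity
  have hrE : 2 * π * r * √(E : ℝ) = 3 := by simp only [r]; field_simp
  have hr_lt : r < 1 / √(E : ℝ) := by
    rw [div_lt_div_iff₀ (by positivity) hsqrtE]
    nlinarith [pi_gt_three]
  obtain ⟨θ, hθ⟩ := exists_mul_nonpos_of_intervalIntegral_eq_mul (by positivity)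
    (hf.integral_circle z r) (hrE ▸ integral_cos_three_mul_cos_neg)
  have hθ_mem : z + r • !₂[cos θ, sin θ] ∈ closedBall z r := by
    rw [mem_closedBall, dist_eq_norm, add_sub_cancel_left, norm_smul_cos_sin, abs_of_pos hr]
  obtain ⟨x, hx, hfx⟩ := (convex_closedBall z r).isPreconnected.exists_eq_zero_of_mul_nonpos
    hf.continuous.continuousOn (mem_closedBall_self hr.le) hθ_mem hθ
  exact ⟨x, closedBall_subset_ball hr_lt hx, hfx⟩
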